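/- arXiv:1511.03607 — 3 statements merged into one kernel-verified Lean document; each statement's English description precedes it below -/
import Mathlib

section
/- Fix any r ∈ (0, 1) and any matrix X₀ ∈ ℝ^{n×p}. Over the set Γ ∩ {w : ‖w‖ ≥ r}, the function w ↦ wᵀ∇g(w; X₀)/‖w‖ is L-Lipschitz with L ≤ (2√n ‖X₀‖_∞)/r + 8 n^{3/2} ‖X₀‖_∞ + (4 n²/μ) ‖X₀‖_∞². -/
open MeasureTheory ProbabilityTheory Real Matrix
open scoped RealInnerProductSpace ENNReal NNReal

noncomputable section

/-- The Bernoulli–Gaussian law `BG(θ)`: with probability `θ` a standard Gaussian,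
with probability `1-θ` a point mass at `0`. -/
def bg (θ : ℝ) : Measure ℝ :=
  θ.toNNReal • gaussianReal 0 1 + (1 - θ).toNNReal • Measure.dirac 0

instance bg.instIsFiniteMeasure (θ : ℝ) : IsFiniteMeasure (bg θ) := by
  unfold bg; infer_instance

/-- Law of an `n × p` matrix with i.i.d. `BG(θ)` entries. -/
def bgMatrix (θ : ℝ) (n p : ℕ) : Measure (Fin n → Fin p → ℝ) :=
  Measure.pi fun _ => Measure.pi fun _ => bg θ

/-- Law of a vector in `ℝ^n` with i.i.d. `BG(θ)` entries. -/
def bgVec (θ : ℝ) (n : ℕ) : Measure (Fin n → ℝ) :=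
  Measure.pi fun _ => bg θ

/-- The smooth sparsity surrogate `h_μ(z) = μ log cosh (z/μ)`. -/
def hmu (μ z : ℝ) : ℝ := μ * Real.log (Real.cosh (z / μ))

/-- Reparametrization `q(w) = (w, √(1-‖w‖²))` with `w` in the unit ball of `ℝ^{n-1}`. -/
def qmap (n : ℕ) (w : EuclideanSpace ℝ (Fin (n - 1))) : Fin n → ℝ :=
  fun i => if h : (i : ℕ) < n - 1 then w ⟨i, h⟩ else Real.sqrt (1 - ‖w‖ ^ 2)

/-- `f(q; Y) = (1/p) ∑ₖ h_μ(qᵀ yₖ)`. -/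
def ffun (n p : ℕ) (μ : ℝ) (Y : Matrix (Fin n) (Fin p) ℝ)
    (q : EuclideanSpace ℝ (Fin n)) : ℝ :=
  (p : ℝ)⁻¹ * ∑ k : Fin p, hmu μ (∑ i : Fin n, q i * Y i k)

/-- `g(w; Y) = f(q(w); Y)`. -/
def gfun (n p : ℕ) (μ : ℝ) (Y : Matrix (Fin n) (Fin p) ℝ)
    (w : EuclideanSpace ℝ (Fin (n - 1))) : ℝ :=
  (p : ℝ)⁻¹ * ∑ k : Fin p, hmu μ (∑ i : Fin n, qmap n w i * Y i k)

/-- Gradient `∇g(w; Y)` in `w`. -/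
def gradg (n p : ℕ) (μ : ℝ) (Y : Matrix (Fin n) (Fin p) ℝ)
    (w : EuclideanSpace ℝ (Fin (n - 1))) : EuclideanSpace ℝ (Fin (n - 1)) :=
  gradient (gfun n p μ Y) w

/-- Hessian `∇²g(w; Y)` in `w`, as a continuous linear map. -/
def hessg (n p : ℕ) (μ : ℝ) (Y : Matrix (Fin n) (Fin p) ℝ)
    (w : EuclideanSpace ℝ (Fin (n - 1))) :
    EuclideanSpace ℝ (Fin (n - 1)) →L[ℝ] EuclideanSpace ℝ (Fin (n - 1)) :=
  fderiv ℝ (gradg n p μ Y) w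

/-- The set `Γ = {w : ‖w‖ < √((4n-1)/(4n))}`. -/
def GammaSet (n : ℕ) : Set (EuclideanSpace ℝ (Fin (n - 1))) :=
  {w | ‖w‖ < Real.sqrt ((4 * (n : ℝ) - 1) / (4 * n))}

/-- Spectral (`ℓ²→ℓ²` operator) norm of а matrix. -/
def specNorm {m k : ℕ} (M : Matrix (Fin m) (Fin k) ℝ) : ℝ :=
  ‖LinearMap.toContinuousLinearMap (Matrix.toEuclideanLin M)‖

/-- Largest magnitude of an entry of a matrix. -/
def Minf {m k : ℕ} (M : Matrix (Fin m) (Fin k) ℝ) : ℝ := ⨆ i, ⨆ j, |M i j|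

/-- Condition number: ratio of largest to smallest singular value. -/
def kappa {n : ℕ} (s : Fin n → ℝ) : ℝ := (⨆ i, s i) / (⨅ i, s i)

/-- Signed standard basis vectors `{± e_i}` of `ℝ^n`. -/
def SignedBasis (n : ℕ) : Set (EuclideanSpace ℝ (Fin n)) :=
  {b | ∃ i : Fin n, b = EuclideanSpace.single i (1 : ℝ) ∨ b = -EuclideanSpace.single i (1 : ℝ)}

/-- Set of local minimizers of `f(·; Y)` over the unit sphere `S^{n-1}`. -/
def LocalMins (n p : ℕ) (μ : ℝ) (Y : Matrix (Fin n) (Fin p) ℝ) :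
    Set (EuclideanSpace ℝ (Fin n)) :=
  {q | q ∈ Metric.sphere (0 : EuclideanSpace ℝ (Fin n)) 1 ∧
       IsLocalMinOn (ffun n p μ Y) (Metric.sphere (0 : EuclideanSpace ℝ (Fin n)) 1) q}

/-- Expected objective `E_x[h_μ(q(w)ᵀ x)]` for `x` with i.i.d. `BG(θ)` entries. -/
def Gexp (n : ℕ) (θ μ : ℝ) (w : EuclideanSpace ℝ (Fin (n - 1))) : ℝ :=
  ∫ x, hmu μ (∑ i : Fin n, qmap n w i * x i) ∂(bgVec θ n)

/-!
Write the columns of `X₀` as `(a_k, c_k)` with `c_k` the last entry, and `u_k(w) = q(w)ᵀ x_k`.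
Then `⟪w, ∇g(w)⟫ / ‖w‖ = (1/p) ∑ₖ tanh(u_k(w)/μ) B_k(w)`, where `B_k` is the derivative of `u_k`
in the direction `w / ‖w‖`. On `Γ` we have `1 - ‖w‖² > 1/(4n)`, so Cauchy–Schwarz in `ℝⁿ` shows
that `u_k` is `2n‖X₀‖_∞`-Lipschitz and that `|B_k| ≤ 2n‖X₀‖_∞`; on the annulus `‖w‖ ≥ r`, `B_k`
is `(2√n/r + 8n^{3/2})‖X₀‖_∞`-Lipschitz. As `tanh` is `1`-Lipschitz and bounded by `1`, the
splitting `AB - A'B' = A(B - B') + (A - A')B'` yields the three terms of the constant.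
-/

namespace Real

theorem hasDerivAt_tanh (x : ℝ) : HasDerivAt tanh (cosh x ^ 2)⁻¹ x := by
  have h := (hasDerivAt_sinh x).div (hasDerivAt_cosh x) (cosh_pos x).ne'
  rw [show sinh x * sinh x = cosh x * cosh x - 1 by linear_combination -cosh_sq_sub_sinh_sq x,
    sub_sub_cancel, one_div] at h
  exact (funext tanh_eq_sinh_div_cosh : tanh = _) ▸ h

theorem abs_tanh_sub_tanh_le (x y : ℝ) : |tanh x - tanh y| ≤ |x - y| := by
  have hderiv : ∀ z ∈ Set.univ, ‖(cosh z ^ 2)⁻¹‖ ≤ 1 := fun z _ => by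
    rw [norm_inv, norm_pow, norm_eq_abs, abs_of_pos (cosh_pos z)]
    exact inv_le_one_of_one_le₀ (one_le_pow₀ (one_le_cosh z))
  simpa only [norm_eq_abs, one_mul] using convex_univ.norm_image_sub_le_of_norm_hasDerivWithin_le
    (fun z _ => (hasDerivAt_tanh z).hasDerivWithinAt) hderiv (Set.mem_univ y) (Set.mem_univ x)

end Real

theorem hasDerivAt_hmu {μ : ℝ} (hμ : μ ≠ 0) (z : ℝ) : HasDerivAt (hmu μ) (tanh (z / μ)) z := by
  have h := (((hasDerivAt_id z).div_const μ).cosh.log (cosh_pos _).ne').const_mul μ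
  refine h.congr_deriv ?_
  rw [id, tanh_eq_sinh_div_cosh]
  field_simp

section SqrtOneSubSq

variable {t R : ℝ}

theorem hasDerivAt_sqrt_one_sub_sq (ht : t ^ 2 < 1) :
    HasDerivAt (fun t : ℝ => √(1 - t ^ 2)) (-t / √(1 - t ^ 2)) t := by
  have h := ((hasDerivAt_pow 2 t).const_sub 1).sqrt (by linarith)
  refine h.congr_deriv ?_
  have hs : 0 < √(1 - t ^ 2) := sqrt_pos.mpr (by linarith)
  field_simp
  ring

theorem hasDerivAt_div_sqrt_one_sub_sq (ht : t ^ 2 < 1) :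
    HasDerivAt (fun t : ℝ => t / √(1 - t ^ 2)) (√(1 - t ^ 2) ^ 3)⁻¹ t := by
  have hs : 0 < √(1 - t ^ 2) := sqrt_pos.mpr (by linarith)
  have hsq : √(1 - t ^ 2) ^ 2 = 1 - t ^ 2 := sq_sqrt (by linarith)
  refine ((hasDerivAt_id t).div (hasDerivAt_sqrt_one_sub_sq ht) hs.ne').congr_deriv ?_
  field_simp
  simp only [id]
  linear_combination hsq

theorem abs_sqrt_one_sub_sq_sub_le (hR : R < 1) {t' : ℝ} (ht : t ∈ Set.Icc 0 R)
    (ht' : t' ∈ Set.Icc 0 R) :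
    |√(1 - t ^ 2) - √(1 - t' ^ 2)| ≤ R / √(1 - R ^ 2) * |t - t'| := by
  have hderiv : ∀ x ∈ Set.Icc 0 R, ‖-x / √(1 - x ^ 2)‖ ≤ R / √(1 - R ^ 2) := by
    rintro x ⟨hx0, hxR⟩
    have hR1 : 0 < 1 - R ^ 2 := by nlinarith
    rw [norm_div, norm_neg, norm_eq_abs, norm_eq_abs, abs_of_nonneg hx0,
      abs_of_nonneg (sqrt_nonneg _)]
    exact div_le_div₀ (hx0.trans hxR) hxR (sqrt_pos.mpr hR1)
      (sqrt_le_sqrt (by nlinarith))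
  simpa only [norm_eq_abs] using (convex_Icc 0 R).norm_image_sub_le_of_norm_hasDerivWithin_le
    (fun x hx => (hasDerivAt_sqrt_one_sub_sq (by nlinarith [hx.1, hx.2])).hasDerivWithinAt)
    hderiv ht' ht

theorem abs_div_sqrt_one_sub_sq_sub_le (hR : R < 1) {t' : ℝ} (ht : t ∈ Set.Icc 0 R)
    (ht' : t' ∈ Set.Icc 0 R) :
    |t / √(1 - t ^ 2) - t' / √(1 - t' ^ 2)| ≤ (√(1 - R ^ 2) ^ 3)⁻¹ * |t - t'| := by
  have hderiv : ∀ x ∈ Set.Icc 0 R, ‖(√(1 - x ^ 2) ^ 3)⁻¹‖ ≤ (√(1 - R ^ 2) ^ 3)⁻¹ := by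
    rintro x ⟨hx0, hxR⟩
    have hR1 : 0 < 1 - R ^ 2 := by nlinarith
    rw [norm_inv, norm_pow, norm_eq_abs, abs_of_nonneg (sqrt_nonneg _)]
    gcongr
  simpa only [norm_eq_abs] using (convex_Icc 0 R).norm_image_sub_le_of_norm_hasDerivWithin_le
    (fun x hx => (hasDerivAt_div_sqrt_one_sub_sq (by nlinarith [hx.1, hx.2])).hasDerivWithinAt)
    hderiv ht' ht

theorem one_sub_sq_sqrt_four_mul_sub_one_div {N : ℝ} (hN : 1 ≤ N) :
    1 - √((4 * N - 1) / (4 * N)) ^ 2 = (4 * N)⁻¹ := by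
  rw [sq_sqrt (div_nonneg (by linarith) (by linarith))]
  field_simp
  ring

theorem sqrt_four_mul_sub_one_div_lt_one {N : ℝ} (hN : 1 ≤ N) :
    √((4 * N - 1) / (4 * N)) < 1 := by
  rw [sqrt_lt' one_pos, one_pow, div_lt_one (by linarith)]
  linarith

end SqrtOneSubSq

section InnerProductSpace

variable {E : Type*} [NormedAddCommGroup E] [InnerProductSpace ℝ E]

theorem norm_inv_norm_smul_sub_inv_norm_smul_le {r : ℝ} (hr : 0 < r) {w w' : E}
    (hw : r ≤ ‖w‖) (hw' : r ≤ ‖w'‖) :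
    ‖‖w‖⁻¹ • w - ‖w'‖⁻¹ • w'‖ ≤ 2 / r * ‖w - w'‖ := by
  have hw0 : 0 < ‖w‖ := hr.trans_le hw
  have hw'0 : 0 < ‖w'‖ := hr.trans_le hw'
  have hsplit : ‖w‖⁻¹ • w - ‖w'‖⁻¹ • w' = ‖w‖⁻¹ • (w - w') + (‖w‖⁻¹ - ‖w'‖⁻¹) • w' := by
    rw [smul_sub, sub_smul]; abel
  have hscalar : |‖w‖⁻¹ - ‖w'‖⁻¹| * ‖w'‖ = |‖w'‖ - ‖w‖| / ‖w‖ := by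
    rw [inv_sub_inv hw0.ne' hw'0.ne', abs_div, abs_of_pos (mul_pos hw0 hw'0)]
    field_simp
  calc ‖‖w‖⁻¹ • w - ‖w'‖⁻¹ • w'‖
      ≤ ‖w‖⁻¹ * ‖w - w'‖ + |‖w‖⁻¹ - ‖w'‖⁻¹| * ‖w'‖ := by
        rw [hsplit]
        refine (norm_add_le _ _).trans_eq ?_
        rw [norm_smul, norm_smul, norm_inv, norm_norm, norm_eq_abs]
    _ = (‖w - w'‖ + |‖w'‖ - ‖w‖|) / ‖w‖ := by rw [hscalar]; ring
    _ ≤ (‖w - w'‖ + ‖w - w'‖) / r := by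
        gcongr
        rw [abs_sub_comm]
        exact abs_norm_sub_norm_le w w'
    _ = 2 / r * ‖w - w'‖ := by ring

theorem abs_inner_add_mul_le {a x : E} {c t K : ℝ} (hK : ‖x‖ ^ 2 + t ^ 2 ≤ K) :
    |⟪a, x⟫ + c * t| ≤ √((‖a‖ ^ 2 + c ^ 2) * K) := by
  apply abs_le_sqrt
  calc (⟪a, x⟫ + c * t) ^ 2 ≤ (‖a‖ * ‖x‖ + |c| * |t|) ^ 2 := by
        rw [← sq_abs]
        gcongr
        exact (abs_add_le _ _).trans (by rw [abs_mul]; gcongr; exact abs_real_inner_le_norm a x)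
    _ ≤ (‖a‖ ^ 2 + c ^ 2) * (‖x‖ ^ 2 + t ^ 2) := by
        rw [← sq_abs c, ← sq_abs t]
        nlinarith [sq_nonneg (‖a‖ * |t| - |c| * ‖x‖)]
    _ ≤ (‖a‖ ^ 2 + c ^ 2) * K := by gcongr

end InnerProductSpace

theorem abs_inv_mul_sum_sub_inv_mul_sum_le {p : ℕ} {f g : Fin p → ℝ} {C : ℝ} (hC : 0 ≤ C)
    (h : ∀ k, |f k - g k| ≤ C) :
    |(p : ℝ)⁻¹ * ∑ k, f k - (p : ℝ)⁻¹ * ∑ k, g k| ≤ C := by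
  rcases Nat.eq_zero_or_pos p with rfl | hp
  · simpa using hC
  rw [← mul_sub, ← Finset.sum_sub_distrib, abs_mul, abs_inv, Nat.abs_cast,
    inv_mul_le_iff₀ (by exact_mod_cast hp)]
  calc |∑ k, (f k - g k)| ≤ ∑ k, |f k - g k| := Finset.abs_sum_le_sum_abs _ _
    _ ≤ ∑ _k : Fin p, C := Finset.sum_le_sum fun k _ => h k
    _ = p * C := by simp

section LiftInner

variable {E : Type*} [NormedAddCommGroup E] [InnerProductSpace ℝ E] (a : E) (c : ℝ)

/-- `q(w)ᵀ x` for `q(w) = (w, √(1 - ‖w‖²))` and the column `x = (a, c)`. -/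
def liftInner (w : E) : ℝ := ⟪a, w⟫ + c * √(1 - ‖w‖ ^ 2)

/-- The derivative of `liftInner a c` at `w` in the direction `w / ‖w‖`. -/
def liftInnerRadial (w : E) : ℝ := ⟪a, ‖w‖⁻¹ • w⟫ - c * (‖w‖ / √(1 - ‖w‖ ^ 2))

variable {a c} {w w' : E} {r R μ N M : ℝ}

theorem hasFDerivAt_liftInner (hw : ‖w‖ < 1) :
    HasFDerivAt (liftInner a c) (innerSL ℝ a - (c / √(1 - ‖w‖ ^ 2)) • innerSL ℝ w) w := by
  have hpos : 0 < 1 - ‖w‖ ^ 2 := by nlinarith [norm_nonneg w]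
  have hsqrt := (((hasStrictFDerivAt_norm_sq w).hasFDerivAt).const_sub 1).sqrt hpos.ne'
  refine ((innerSL ℝ a).hasFDerivAt.add (hsqrt.const_mul c)).congr_fderiv ?_
  ext v
  simp only [_root_.add_apply, _root_.sub_apply, _root_.smul_apply, _root_.neg_apply,
    innerSL_apply_apply, smul_eq_mul, nsmul_eq_mul]
  field_simp
  ring

theorem abs_liftInner_sub_le (hR : R < 1) (hw : ‖w‖ ≤ R) (hw' : ‖w'‖ ≤ R) :
    |liftInner a c w - liftInner a c w'| ≤ √((‖a‖ ^ 2 + c ^ 2) / (1 - R ^ 2)) * ‖w - w'‖ := by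
  have hR1 : 0 < 1 - R ^ 2 := by nlinarith [norm_nonneg w]
  have hsqrt := abs_sqrt_one_sub_sq_sub_le hR ⟨norm_nonneg w, hw⟩ ⟨norm_nonneg w', hw'⟩
  have hnorm : |‖w‖ - ‖w'‖| ≤ ‖w - w'‖ := abs_norm_sub_norm_le w w'
  have hstep : ‖w - w'‖ ^ 2 + (√(1 - ‖w‖ ^ 2) - √(1 - ‖w'‖ ^ 2)) ^ 2
      ≤ ‖w - w'‖ ^ 2 / (1 - R ^ 2) := by
    have hK : (R / √(1 - R ^ 2)) ^ 2 = R ^ 2 / (1 - R ^ 2) := by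
      rw [div_pow, sq_sqrt hR1.le]
    calc ‖w - w'‖ ^ 2 + (√(1 - ‖w‖ ^ 2) - √(1 - ‖w'‖ ^ 2)) ^ 2
        ≤ ‖w - w'‖ ^ 2 + (R / √(1 - R ^ 2) * ‖w - w'‖) ^ 2 := by
          rw [← sq_abs (_ - _)]
          gcongr
          exact hsqrt.trans (mul_le_mul_of_nonneg_left hnorm
            (div_nonneg ((norm_nonneg w).trans hw) (sqrt_nonneg _)))
      _ = ‖w - w'‖ ^ 2 / (1 - R ^ 2) := by
          rw [mul_pow, hK]
          field_simp
          ring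
  calc |liftInner a c w - liftInner a c w'|
      = |⟪a, w - w'⟫ + c * (√(1 - ‖w‖ ^ 2) - √(1 - ‖w'‖ ^ 2))| := by
        rw [liftInner, liftInner, inner_sub_right]; ring_nf
    _ ≤ √((‖a‖ ^ 2 + c ^ 2) * (‖w - w'‖ ^ 2 / (1 - R ^ 2))) := abs_inner_add_mul_le hstep
    _ = √((‖a‖ ^ 2 + c ^ 2) / (1 - R ^ 2)) * ‖w - w'‖ := by
        rw [mul_div_left_comm, mul_comm, sqrt_mul' _ (sq_nonneg _), sqrt_sq (norm_nonneg _)]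

theorem abs_liftInnerRadial_le (hw0 : w ≠ 0) (hR : R < 1) (hw : ‖w‖ ≤ R) :
    |liftInnerRadial a c w| ≤ √((‖a‖ ^ 2 + c ^ 2) / (1 - R ^ 2)) := by
  have hR1 : 0 < 1 - R ^ 2 := by nlinarith [norm_nonneg w]
  have hw1 : 0 < 1 - ‖w‖ ^ 2 := by nlinarith [norm_nonneg w]
  have hunit : ‖‖w‖⁻¹ • w‖ = 1 := norm_smul_inv_norm hw0
  have hstep : ‖‖w‖⁻¹ • w‖ ^ 2 + (-(‖w‖ / √(1 - ‖w‖ ^ 2))) ^ 2 ≤ 1 / (1 - R ^ 2) := by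
    rw [hunit, neg_sq, div_pow, sq_sqrt hw1.le]
    calc (1 : ℝ) ^ 2 + ‖w‖ ^ 2 / (1 - ‖w‖ ^ 2) = 1 / (1 - ‖w‖ ^ 2) := by field_simp; ring
      _ ≤ 1 / (1 - R ^ 2) := by gcongr
  calc |liftInnerRadial a c w|
      = |⟪a, ‖w‖⁻¹ • w⟫ + c * -(‖w‖ / √(1 - ‖w‖ ^ 2))| := by rw [liftInnerRadial]; ring_nf
    _ ≤ √((‖a‖ ^ 2 + c ^ 2) * (1 / (1 - R ^ 2))) := abs_inner_add_mul_le hstep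
    _ = √((‖a‖ ^ 2 + c ^ 2) / (1 - R ^ 2)) := by rw [mul_one_div]

theorem abs_liftInnerRadial_sub_le (hr : 0 < r) (hR : R < 1) (hw : r ≤ ‖w‖) (hw' : r ≤ ‖w'‖)
    (hwR : ‖w‖ ≤ R) (hw'R : ‖w'‖ ≤ R) :
    |liftInnerRadial a c w - liftInnerRadial a c w'|
      ≤ (2 * ‖a‖ / r + |c| / √(1 - R ^ 2) ^ 3) * ‖w - w'‖ := by
  have hunit := norm_inv_norm_smul_sub_inv_norm_smul_le hr hw hw'
  have hratio := abs_div_sqrt_one_sub_sq_sub_le hR ⟨norm_nonneg w, hwR⟩ ⟨norm_nonneg w', hw'R⟩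
  have hnorm : |‖w‖ - ‖w'‖| ≤ ‖w - w'‖ := abs_norm_sub_norm_le w w'
  calc |liftInnerRadial a c w - liftInnerRadial a c w'|
      = |⟪a, ‖w‖⁻¹ • w - ‖w'‖⁻¹ • w'⟫
          - c * (‖w‖ / √(1 - ‖w‖ ^ 2) - ‖w'‖ / √(1 - ‖w'‖ ^ 2))| := by
        rw [liftInnerRadial, liftInnerRadial, inner_sub_right]; ring_nf
    _ ≤ ‖a‖ * (2 / r * ‖w - w'‖) + |c| * ((√(1 - R ^ 2) ^ 3)⁻¹ * ‖w - w'‖) := by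
        refine (abs_sub _ _).trans (add_le_add ?_ ?_)
        · exact (abs_real_inner_le_norm _ _).trans (by gcongr)
        · rw [abs_mul]
          exact mul_le_mul_of_nonneg_left (hratio.trans (by gcongr)) (abs_nonneg c)
    _ = (2 * ‖a‖ / r + |c| / √(1 - R ^ 2) ^ 3) * ‖w - w'‖ := by ring

theorem abs_tanh_mul_liftInnerRadial_sub_le (hμ : 0 < μ) (hr : 0 < r) (hR : R < 1)
    (hw : r ≤ ‖w‖) (hw' : r ≤ ‖w'‖) (hwR : ‖w‖ ≤ R) (hw'R : ‖w'‖ ≤ R) :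
    |tanh (liftInner a c w / μ) * liftInnerRadial a c w
        - tanh (liftInner a c w' / μ) * liftInnerRadial a c w'|
      ≤ (2 * ‖a‖ / r + |c| / √(1 - R ^ 2) ^ 3 + (‖a‖ ^ 2 + c ^ 2) / (1 - R ^ 2) / μ)
          * ‖w - w'‖ := by
  have hR1 : 0 < 1 - R ^ 2 := by nlinarith [norm_nonneg w]
  set K := √((‖a‖ ^ 2 + c ^ 2) / (1 - R ^ 2))
  have hK : K * K = (‖a‖ ^ 2 + c ^ 2) / (1 - R ^ 2) := mul_self_sqrt (by positivity)
  have htanh : |tanh (liftInner a c w / μ) - tanh (liftInner a c w' / μ)|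
      ≤ K * ‖w - w'‖ / μ := by
    refine (abs_tanh_sub_tanh_le _ _).trans ?_
    rw [← sub_div, abs_div, abs_of_pos hμ]
    gcongr
    exact abs_liftInner_sub_le hR hwR hw'R
  have hw'0 : w' ≠ 0 := norm_pos_iff.mp (hr.trans_le hw')
  calc |tanh (liftInner a c w / μ) * liftInnerRadial a c w
        - tanh (liftInner a c w' / μ) * liftInnerRadial a c w'|
      ≤ |tanh (liftInner a c w / μ)| * |liftInnerRadial a c w - liftInnerRadial a c w'|
        + |tanh (liftInner a c w / μ) - tanh (liftInner a c w' / μ)|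
          * |liftInnerRadial a c w'| := by
        rw [← abs_mul, ← abs_mul]
        exact (abs_add_le _ _).trans_eq' (by ring_nf)
    _ ≤ 1 * ((2 * ‖a‖ / r + |c| / √(1 - R ^ 2) ^ 3) * ‖w - w'‖) + K * ‖w - w'‖ / μ * K := by
        gcongr
        · exact (abs_tanh_lt_one _).le
        · exact abs_liftInnerRadial_sub_le hr hR hw hw' hwR hw'R
        · exact abs_liftInnerRadial_le hw'0 hR hw'R
    _ = _ := by rw [← hK]; ring

theorem abs_tanh_mul_liftInnerRadial_sub_le_of_norm_lt_sqrt (hμ : 0 < μ) (hr : 0 < r)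
    (hN : 1 ≤ N) (hM : 0 ≤ M) (hS : ‖a‖ ^ 2 + c ^ 2 ≤ N * M ^ 2) (hc : |c| ≤ M)
    (hw : r ≤ ‖w‖) (hw' : r ≤ ‖w'‖) (hwR : ‖w‖ < √((4 * N - 1) / (4 * N)))
    (hw'R : ‖w'‖ < √((4 * N - 1) / (4 * N))) :
    |tanh (liftInner a c w / μ) * liftInnerRadial a c w
        - tanh (liftInner a c w' / μ) * liftInnerRadial a c w'|
      ≤ (2 * √N * M / r + 8 * N ^ ((3 : ℝ) / 2) * M + 4 * N ^ 2 / μ * M ^ 2) * ‖w - w'‖ := by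
  refine (abs_tanh_mul_liftInnerRadial_sub_le hμ hr (sqrt_four_mul_sub_one_div_lt_one hN)
    hw hw' hwR.le hw'R.le).trans ?_
  have ha : ‖a‖ ≤ √N * M := by
    rw [← sqrt_sq hM, ← sqrt_mul (by positivity), le_sqrt (norm_nonneg _) (by positivity)]
    nlinarith [sq_nonneg c]
  have hcube : (√((4 * N)⁻¹) ^ 3)⁻¹ = 8 * N ^ ((3 : ℝ) / 2) := by
    rw [sqrt_inv, inv_pow, inv_inv, show (3 : ℝ) / 2 = 1 + 1 / 2 by norm_num,
      rpow_add (by positivity), rpow_one, ← sqrt_eq_rpow, sqrt_mul (by norm_num),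
      show (4 : ℝ) = 2 ^ 2 by norm_num, sqrt_sq (by norm_num)]
    linear_combination (8 * √N) * sq_sqrt (by positivity : 0 ≤ N)
  rw [one_sub_sq_sqrt_four_mul_sub_one_div hN, div_eq_mul_inv _ (√_ ^ 3), hcube]
  gcongr ?_ * _
  calc _ ≤ 2 * (√N * M) / r + M * (8 * N ^ ((3 : ℝ) / 2)) + N * M ^ 2 / (4 * N)⁻¹ / μ := by
        gcongr
    _ = _ := by field_simp

end LiftInner

section Coordinates

variable {m p : ℕ} {μ : ℝ}

theorem abs_le_Minf {m₁ m₂ : ℕ} (Y : Matrix (Fin m₁) (Fin m₂) ℝ) (i : Fin m₁) (j : Fin m₂) :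
    |Y i j| ≤ Minf Y :=
  (le_ciSup (Set.finite_range _).bddAbove j).trans
    (le_ciSup (f := fun i => ⨆ j, |Y i j|) (Set.finite_range _).bddAbove i)

theorem Minf_nonneg {m₁ m₂ : ℕ} (Y : Matrix (Fin m₁) (Fin m₂) ℝ) : 0 ≤ Minf Y :=
  iSup_nonneg fun _ => iSup_nonneg fun _ => abs_nonneg _

theorem sum_sq_le_Minf_sq {m₁ m₂ : ℕ} (Y : Matrix (Fin m₁) (Fin m₂) ℝ) (j : Fin m₂) :
    ∑ i, Y i j ^ 2 ≤ m₁ * Minf Y ^ 2 := by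
  calc ∑ i, Y i j ^ 2 ≤ ∑ _i : Fin m₁, Minf Y ^ 2 :=
        Finset.sum_le_sum fun i _ => sq_le_sq' (abs_le.mp (abs_le_Minf Y i j)).1
          (abs_le.mp (abs_le_Minf Y i j)).2
    _ = m₁ * Minf Y ^ 2 := by simp

def colHead (Y : Matrix (Fin (m + 1)) (Fin p) ℝ) (k : Fin p) : EuclideanSpace ℝ (Fin m) :=
  WithLp.toLp 2 fun i => Y i.castSucc k

theorem norm_colHead_sq_add_sq (Y : Matrix (Fin (m + 1)) (Fin p) ℝ) (k : Fin p) :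
    ‖colHead Y k‖ ^ 2 + Y (Fin.last m) k ^ 2 = ∑ i, Y i k ^ 2 := by
  rw [EuclideanSpace.norm_sq_eq, Fin.sum_univ_castSucc]
  simp [colHead]

theorem sum_qmap_mul_eq_liftInner (Y : Matrix (Fin (m + 1)) (Fin p) ℝ) (k : Fin p)
    (w : EuclideanSpace ℝ (Fin m)) :
    ∑ i, qmap (m + 1) w i * Y i k = liftInner (colHead Y k) (Y (Fin.last m) k) w := by
  rw [Fin.sum_univ_castSucc, liftInner, PiLp.inner_apply]
  simp [qmap, colHead, mul_comm]

theorem hasFDerivAt_gfun (hμ : μ ≠ 0) (Y : Matrix (Fin (m + 1)) (Fin p) ℝ)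
    {w : EuclideanSpace ℝ (Fin m)} (hw : ‖w‖ < 1) :
    HasFDerivAt (gfun (m + 1) p μ Y)
      ((p : ℝ)⁻¹ • ∑ k, tanh (liftInner (colHead Y k) (Y (Fin.last m) k) w / μ) •
        (innerSL ℝ (colHead Y k) - (Y (Fin.last m) k / √(1 - ‖w‖ ^ 2)) • innerSL ℝ w)) w := by
  have hg : gfun (m + 1) p μ Y
      = fun w => (p : ℝ)⁻¹ * ∑ k, hmu μ (liftInner (colHead Y k) (Y (Fin.last m) k) w) := by
    funext w
    simp only [gfun, sum_qmap_mul_eq_liftInner]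
  rw [hg]
  exact (HasFDerivAt.fun_sum fun k _ =>
    (hasDerivAt_hmu hμ _).comp_hasFDerivAt w (hasFDerivAt_liftInner hw)).const_mul _

theorem inner_gradg_div_norm (hμ : μ ≠ 0) (Y : Matrix (Fin (m + 1)) (Fin p) ℝ)
    {w : EuclideanSpace ℝ (Fin m)} (hw0 : w ≠ 0) (hw : ‖w‖ < 1) :
    ⟪w, gradg (m + 1) p μ Y w⟫ / ‖w‖ = (p : ℝ)⁻¹ * ∑ k,
      tanh (liftInner (colHead Y k) (Y (Fin.last m) k) w / μ)
        * liftInnerRadial (colHead Y k) (Y (Fin.last m) k) w := by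
  have hnorm : ‖w‖ ≠ 0 := norm_ne_zero_iff.mpr hw0
  have hs : √(1 - ‖w‖ ^ 2) ≠ 0 := (sqrt_pos.mpr (by nlinarith [norm_nonneg w])).ne'
  change ⟪w, (InnerProductSpace.toDual ℝ (EuclideanSpace ℝ (Fin m))).symm
    (fderiv ℝ (gfun (m + 1) p μ Y) w)⟫ / ‖w‖ = _
  rw [(hasFDerivAt_gfun hμ Y hw).fderiv, real_inner_comm, InnerProductSpace.toDual_symm_apply]
  simp only [_root_.smul_apply, _root_.sum_apply, _root_.sub_apply, innerSL_apply_apply,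
    smul_eq_mul, real_inner_self_eq_norm_sq, liftInnerRadial, real_inner_smul_right,
    mul_div_assoc, Finset.sum_div]
  congr 1
  refine Finset.sum_congr rfl fun k _ => ?_
  field_simp

end Coordinates

/-- Proposition: Lipschitz property of the directional gradient. -/
theorem statement11 (n p : ℕ) (μ r : ℝ) (hμ : 0 < μ) (hr : r ∈ Set.Ioo (0 : ℝ) 1)
    (X₀ : Matrix (Fin n) (Fin p) ℝ) :
    ∀ w ∈ GammaSet n ∩ {w | r ≤ ‖w‖}, ∀ w' ∈ GammaSet n ∩ {w | r ≤ ‖w‖},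
      |⟪w, gradg n p μ X₀ w⟫ / ‖w‖ - ⟪w', gradg n p μ X₀ w'⟫ / ‖w'‖| ≤
        (2 * Real.sqrt n * Minf X₀ / r +
         8 * (n : ℝ) ^ ((3 : ℝ) / 2) * Minf X₀ +
         4 * (n : ℝ) ^ 2 / μ * Minf X₀ ^ 2) * ‖w - w'‖ := by
  rintro w ⟨hwΓ, hwr⟩ w' ⟨hw'Γ, hw'r⟩
  have hr0 : 0 < r := hr.1
  have hw0 : w ≠ 0 := norm_pos_iff.mp (hr0.trans_le hwr)
  have hw'0 : w' ≠ 0 := norm_pos_iff.mp (hr0.trans_le hw'r)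
  obtain ⟨m, rfl⟩ : ∃ m, n = m + 1 := Nat.exists_eq_succ_of_ne_zero fun hn => by
    subst hn
    exact hw0 (by ext i; exact (Nat.not_lt_zero _ i.isLt).elim)
  have hN : (1 : ℝ) ≤ (m + 1 : ℕ) := by simp
  have hR1 := sqrt_four_mul_sub_one_div_lt_one hN
  have hM := Minf_nonneg X₀
  rw [inner_gradg_div_norm hμ.ne' X₀ hw0 (hwΓ.trans hR1),
    inner_gradg_div_norm hμ.ne' X₀ hw'0 (hw'Γ.trans hR1)]
  exact abs_inv_mul_sum_sub_inv_mul_sum_le (by positivity) fun k =>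
    abs_tanh_mul_liftInnerRadial_sub_le_of_norm_lt_sqrt hμ hr0 hN hM
      (norm_colHead_sq_add_sq X₀ k ▸ sum_sq_le_Minf_sq X₀ k) (abs_le_Minf X₀ _ k)
      hwr hw'r hwΓ hw'Γ

end
end

section
/- Let f(t) = 1/(1+t)² on [0,1]. For every T > 1, set β = 1 − 1/√T and define the coefficients b_k = (−1)^k (k+1) β^k for k ≥ 0 and the function p(t) = Σ_{k=0}^∞ b_k t^k = 1/(1+βt)². Then: (i) Σ_{k=0}^∞ |b_k| = T; (ii) ∫_0^1 |f(t) − p(t)| dt ≤ 1/(2√T); (iii) sup_{t ∈ [0,1]} |f(t) − p(t)| ≤ 1/√T; and (iv) 0 < Σ_{k=0}^∞ b_k/(1+k)³ ≤ Σ_{k=0}^∞ |b_k|/(1+k)³ < 2. -/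
open MeasureTheory ProbabilityTheory Real Matrix
open scoped RealInnerProductSpace ENNReal NNReal

noncomputable section

/-! The series is the binomial series of `(1 + βt)⁻²`, and its absolute series that of
`(1 - β)⁻²`, which is `T` by the choice of `β`. On `[0, 1]`,
`(1 + βt)⁻² - (1 + t)⁻² = (1 - β) t (2 + t + βt) / ((1 + βt)² (1 + t)²)`, and since
`2 + t + βt ≤ (2 + t) (1 + βt)²` this is at most `(1 - β) (1 - (1 + t)⁻²)`, a bound with
integral `(1 - β) / 2` and supremum at most `1 - β = 1 / √T`. Finally
`b_k / (1 + k)³ = (-1)ᵏ βᵏ / (k + 1)²` is an alternating series with decreasing terms, so its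
sum exceeds that of its first two terms, `1 - β / 4 > 0`, while its absolute sum is at most
`ζ(2) = π² / 6 < 2`. -/

open Set

def approxCoeff (β : ℝ) (k : ℕ) : ℝ := (-1) ^ k * ((k : ℝ) + 1) * β ^ k

theorem hasSum_succ_mul_pow {r : ℝ} (hr : |r| < 1) :
    HasSum (fun k : ℕ => ((k : ℝ) + 1) * r ^ k) (1 / (1 - r) ^ 2) := by
  simpa using hasSum_choose_mul_geometric_of_norm_lt_one (𝕜 := ℝ) 1 hr

theorem hasSum_one_div_succ_sq :
    HasSum (fun k : ℕ => 1 / ((k : ℝ) + 1) ^ 2) (π ^ 2 / 6) := by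
  have h := (hasSum_nat_add_iff (f := fun n : ℕ => 1 / (n : ℝ) ^ 2) 1).2
    (by simpa using hasSum_zeta_two)
  simpa using h

theorem Antitone.sub_le_tsum_alternating {f : ℕ → ℝ} (hfa : Antitone f) (hfs : Summable f) :
    f 0 - f 1 ≤ ∑' k, (-1) ^ k * f k := by
  simpa [Finset.sum_range_succ, sub_eq_add_neg] using
    hfa.alternating_series_le_tendsto hfs.tendsto_alternating_series_tsum 1

theorem continuousOn_one_sub_one_div_one_add_sq :
    ContinuousOn (fun t : ℝ => 1 - 1 / (1 + t) ^ 2) (uIcc 0 1) := by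
  rw [uIcc_of_le zero_le_one]
  fun_prop (disch := (intro x hx; apply pow_ne_zero; linarith [hx.1]))

theorem integral_one_sub_one_div_one_add_sq :
    ∫ t in (0 : ℝ)..1, (1 - 1 / (1 + t) ^ 2) = 1 / 2 := by
  have hderiv : ∀ t ∈ uIcc (0 : ℝ) 1,
      HasDerivAt (fun t : ℝ => t + (1 + t)⁻¹) (1 - 1 / (1 + t) ^ 2) t := by
    intro t ht
    rw [uIcc_of_le zero_le_one] at ht
    have hpos : 1 + t ≠ 0 := by linarith [ht.1]
    exact ((hasDerivAt_id' t).add (((hasDerivAt_id' t).const_add 1).inv hpos)).congr_deriv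
      (by ring)
  rw [intervalIntegral.integral_eq_sub_of_hasDerivAt hderiv
    continuousOn_one_sub_one_div_one_add_sq.intervalIntegrable]
  norm_num

section

variable {β : ℝ}

theorem hasSum_approxCoeff_mul_pow {t : ℝ} (hβt : |β * t| < 1) :
    HasSum (fun k => approxCoeff β k * t ^ k) (1 / (1 + β * t) ^ 2) := by
  have h := hasSum_succ_mul_pow (r := -(β * t)) (by rwa [abs_neg])
  rw [sub_neg_eq_add] at h
  convert h using 2 with k
  rw [approxCoeff, neg_pow (β * t), mul_pow]
  ring

theorem abs_approxCoeff (hβ : 0 ≤ β) (k : ℕ) : |approxCoeff β k| = ((k : ℝ) + 1) * β ^ k := by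
  rw [approxCoeff, abs_mul, abs_mul, abs_neg_one_pow, one_mul, abs_of_nonneg (by positivity),
    abs_of_nonneg (by positivity)]

theorem hasSum_abs_approxCoeff (hβ0 : 0 ≤ β) (hβ1 : β < 1) :
    HasSum (fun k => |approxCoeff β k|) (1 / (1 - β) ^ 2) := by
  simpa only [abs_approxCoeff hβ0] using hasSum_succ_mul_pow (by rwa [abs_of_nonneg hβ0])

theorem approxCoeff_div_one_add_pow_three (k : ℕ) :
    approxCoeff β k / (1 + k) ^ 3 = (-1) ^ k * (β ^ k / ((k : ℝ) + 1) ^ 2) := by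
  rw [approxCoeff, add_comm (1 : ℝ)]
  field_simp

theorem abs_approxCoeff_div_one_add_pow_three (hβ : 0 ≤ β) (k : ℕ) :
    |approxCoeff β k| / (1 + k) ^ 3 = β ^ k / ((k : ℝ) + 1) ^ 2 := by
  rw [abs_approxCoeff hβ, add_comm (1 : ℝ)]
  field_simp

theorem abs_one_div_one_add_sq_sub_le {t : ℝ} (hβ0 : 0 ≤ β) (hβ1 : β ≤ 1)
    (ht : t ∈ Icc (0 : ℝ) 1) :
    |1 / (1 + t) ^ 2 - 1 / (1 + β * t) ^ 2| ≤ (1 - β) * (1 - 1 / (1 + t) ^ 2) := by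
  obtain ⟨ht0, -⟩ := ht
  have hβt : 0 ≤ β * t := mul_nonneg hβ0 ht0
  have hdiff : 1 / (1 + β * t) ^ 2 - 1 / (1 + t) ^ 2
      = (1 - β) * t / (1 + t) ^ 2 * ((2 + t + β * t) / (1 + β * t) ^ 2) := by
    field_simp
    ring
  have hbound : (1 - β) * (1 - 1 / (1 + t) ^ 2) = (1 - β) * t / (1 + t) ^ 2 * (2 + t) := by
    field_simp
    ring
  have h1β : 0 ≤ 1 - β := sub_nonneg.2 hβ1
  rw [abs_sub_comm, abs_of_nonneg (by rw [hdiff]; positivity), hdiff, hbound]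
  gcongr
  rw [div_le_iff₀ (by positivity)]
  nlinarith [mul_nonneg hβt ht0, mul_nonneg (mul_nonneg hβt hβt) ht0]

theorem abs_one_div_one_add_sq_sub_le_one_sub {t : ℝ} (hβ0 : 0 ≤ β) (hβ1 : β ≤ 1)
    (ht : t ∈ Icc (0 : ℝ) 1) : |1 / (1 + t) ^ 2 - 1 / (1 + β * t) ^ 2| ≤ 1 - β := by
  refine (abs_one_div_one_add_sq_sub_le hβ0 hβ1 ht).trans (mul_le_of_le_one_right ?_ ?_)
  · linarith
  · have : 0 ≤ 1 / (1 + t) ^ 2 := by positivity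
    linarith

theorem integral_abs_one_div_one_add_sq_sub_le (hβ0 : 0 ≤ β) (hβ1 : β ≤ 1) :
    ∫ t in (0 : ℝ)..1, |1 / (1 + t) ^ 2 - 1 / (1 + β * t) ^ 2| ≤ (1 - β) / 2 := by
  have hcont :
      ContinuousOn (fun t : ℝ => |1 / (1 + t) ^ 2 - 1 / (1 + β * t) ^ 2|) (uIcc 0 1) := by
    rw [uIcc_of_le zero_le_one]
    fun_prop (disch := (intro x hx; apply pow_ne_zero; nlinarith [hx.1, mul_nonneg hβ0 hx.1]))
  calc ∫ t in (0 : ℝ)..1, |1 / (1 + t) ^ 2 - 1 / (1 + β * t) ^ 2|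
      ≤ ∫ t in (0 : ℝ)..1, (1 - β) * (1 - 1 / (1 + t) ^ 2) :=
        intervalIntegral.integral_mono_on zero_le_one hcont.intervalIntegrable
          (continuousOn_const.mul continuousOn_one_sub_one_div_one_add_sq).intervalIntegrable
          fun t ht => abs_one_div_one_add_sq_sub_le hβ0 hβ1 ht
    _ = (1 - β) / 2 := by
        rw [intervalIntegral.integral_const_mul, integral_one_sub_one_div_one_add_sq]
        ring

theorem antitone_pow_div_succ_sq (hβ0 : 0 ≤ β) (hβ1 : β ≤ 1) :
    Antitone fun k : ℕ => β ^ k / ((k : ℝ) + 1) ^ 2 := by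
  refine antitone_nat_of_succ_le fun k => ?_
  push_cast
  gcongr ?_ / ?_
  · exact pow_le_pow_of_le_one hβ0 hβ1 k.le_succ
  · gcongr
    linarith

theorem summable_pow_div_succ_sq (hβ0 : 0 ≤ β) (hβ1 : β ≤ 1) :
    Summable fun k : ℕ => β ^ k / ((k : ℝ) + 1) ^ 2 :=
  hasSum_one_div_succ_sq.summable.of_nonneg_of_le (fun k => by positivity)
    fun k => by gcongr; exact pow_le_one₀ hβ0 hβ1

theorem tsum_pow_div_succ_sq_lt_two (hβ0 : 0 ≤ β) (hβ1 : β ≤ 1) :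
    ∑' k : ℕ, β ^ k / ((k : ℝ) + 1) ^ 2 < 2 :=
  calc ∑' k : ℕ, β ^ k / ((k : ℝ) + 1) ^ 2
      ≤ ∑' k : ℕ, 1 / ((k : ℝ) + 1) ^ 2 :=
        (summable_pow_div_succ_sq hβ0 hβ1).tsum_le_tsum
          (fun k => by gcongr; exact pow_le_one₀ hβ0 hβ1) hasSum_one_div_succ_sq.summable
    _ = π ^ 2 / 6 := hasSum_one_div_succ_sq.tsum_eq
    _ < 2 := by nlinarith [pi_lt_d2, pi_pos]

theorem tsum_approxCoeff_div_one_add_pow_three_pos (hβ0 : 0 ≤ β) (hβ1 : β ≤ 1) :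
    0 < ∑' k : ℕ, approxCoeff β k / (1 + k) ^ 3 := by
  have h := (antitone_pow_div_succ_sq hβ0 hβ1).sub_le_tsum_alternating
    (summable_pow_div_succ_sq hβ0 hβ1)
  simp only [← approxCoeff_div_one_add_pow_three] at h
  norm_num at h
  linarith

end

/-- Lemma: polynomial approximation of `1/(1+t)²` on `[0,1]`. -/
theorem statement15 (T β : ℝ) (hT : 1 < T) (hβ : β = 1 - 1 / Real.sqrt T)
    (b : ℕ → ℝ) (hb : ∀ k : ℕ, b k = (-1) ^ k * ((k : ℝ) + 1) * β ^ k)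
    (P : ℝ → ℝ) (hP : ∀ t : ℝ, P t = 1 / (1 + β * t) ^ 2) :
    (∀ t ∈ Set.Icc (0 : ℝ) 1, ∑' k : ℕ, b k * t ^ k = P t) ∧
    (∑' k : ℕ, |b k|) = T ∧
    (∫ t in (0 : ℝ)..1, |1 / (1 + t) ^ 2 - P t|) ≤ 1 / (2 * Real.sqrt T) ∧
    (∀ t ∈ Set.Icc (0 : ℝ) 1, |1 / (1 + t) ^ 2 - P t| ≤ 1 / Real.sqrt T) ∧
    0 < (∑' k : ℕ, b k / ((1 : ℝ) + k) ^ 3) ∧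
    (∑' k : ℕ, b k / ((1 : ℝ) + k) ^ 3) ≤ (∑' k : ℕ, |b k| / ((1 : ℝ) + k) ^ 3) ∧
    (∑' k : ℕ, |b k| / ((1 : ℝ) + k) ^ 3) < 2 := by
  have hsqrtT : 1 < √T := by simpa using Real.sqrt_lt_sqrt zero_le_one hT
  have h1β : 1 - β = 1 / √T := by rw [hβ]; ring
  have hβ0 : 0 ≤ β := by rw [hβ, sub_nonneg, div_le_one (by positivity)]; exact hsqrtT.le
  have hβ1 : β < 1 := by linarith [one_div_pos.2 (zero_lt_one.trans hsqrtT)]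
  obtain rfl : b = approxCoeff β := funext hb
  obtain rfl : P = fun t => 1 / (1 + β * t) ^ 2 := funext hP
  have habs : ∀ k, |approxCoeff β k| / (1 + k) ^ 3 = β ^ k / ((k : ℝ) + 1) ^ 2 :=
    abs_approxCoeff_div_one_add_pow_three hβ0
  have hsummable := summable_pow_div_succ_sq hβ0 hβ1.le
  refine ⟨fun t ht => (hasSum_approxCoeff_mul_pow ?_).tsum_eq, ?_,
    (integral_abs_one_div_one_add_sq_sub_le hβ0 hβ1.le).trans_eq ?_,
    fun t ht => (abs_one_div_one_add_sq_sub_le_one_sub hβ0 hβ1.le ht).trans_eq h1β,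
    tsum_approxCoeff_div_one_add_pow_three_pos hβ0 hβ1.le, ?_, ?_⟩
  · rw [abs_of_nonneg (mul_nonneg hβ0 ht.1)]
    exact (mul_le_of_le_one_right hβ0 ht.2).trans_lt hβ1
  · rw [(hasSum_abs_approxCoeff hβ0 hβ1).tsum_eq, h1β, _root_.one_div_pow, one_div_one_div,
      sq_sqrt (by linarith)]
  · rw [h1β, div_div, mul_comm]
  · refine Summable.tsum_le_tsum (fun k => ?_) ?_ ?_
    · gcongr
      exact le_abs_self _
    · simpa only [approxCoeff_div_one_add_pow_three] using hsummable.alternating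
    · simpa only [habs] using hsummable
  · simpa only [habs] using tsum_pow_div_succ_sq_lt_two hβ0 hβ1.le

end
end

section
/- Let X ~ N(0, σ_X²) and Y ~ N(0, σ_Y²) be independent real Gaussian random variables with σ_X, σ_Y > 0, and let μ > 0. Then E[ (1 − tanh²((X+Y)/μ)) · XY · 1{X+Y > 0} ] ≥ −(1/√(2π)) · μ σ_X² σ_Y² / (σ_X² + σ_Y²)^{3/2} − (3/√(2π)) · σ_X² σ_Y² μ³ / (σ_X² + σ_Y²)^{5/2}. -/
open MeasureTheory ProbabilityTheory Real Matrix
open scoped RealInnerProductSpace ENNReal NNReal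

noncomputable section

/-!
Write `A = σX²`, `B = σY²` and `S = X + Y`. Conditionally on `S = s`, `X` is Gaussian with mean
`A s / (A + B)` and variance `A B / (A + B)`, so `E[XY | S = s] = A B s² / (A + B)² - A B / (A + B)`
is at least `-A B / (A + B)`. Hence the expectation is at least `-A B / (A + B) · E[w(S)]` for
`w(s) = 1{s > 0} (1 - tanh²(s/μ))`; bounding the density of `S ~ N(0, A + B)` by
`1/√(2π(A + B))` and using `∫₀^∞ (1 - tanh²(s/μ)) ds = μ` already gives the bound without its
second term.
-/

section
open Set Filter Topology

lemma Real.hasDerivAt_tanh_s17 (x : ℝ) : HasDerivAt tanh (1 - tanh x ^ 2) x := by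
  have h := (hasDerivAt_sinh x).div (hasDerivAt_cosh x) (cosh_pos x).ne'
  rw [show sinh / cosh = tanh from funext fun y => (tanh_eq_sinh_div_cosh y).symm] at h
  refine h.congr_deriv ?_
  rw [tanh_eq_sinh_div_cosh]
  field_simp

@[fun_prop]
lemma Real.continuous_tanh : Continuous tanh :=
  continuous_iff_continuousAt.mpr fun x => (hasDerivAt_tanh_s17 x).continuousAt

lemma Real.tendsto_tanh_atTop : Tendsto tanh atTop (𝓝 1) := by
  have h : Tendsto (fun x => exp (-(2 * x))) atTop (𝓝 0) :=
    tendsto_exp_neg_atTop_nhds_zero.comp (tendsto_id.const_mul_atTop two_pos)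
  have := (tendsto_const_nhds (x := (1 : ℝ)).sub h).div (tendsto_const_nhds.add h)
    (by norm_num : (1 : ℝ) + 0 ≠ 0)
  rw [sub_zero, add_zero, div_one] at this
  refine this.congr fun x => ?_
  have hinv : exp x * exp (-x) = 1 := by rw [← exp_add, add_neg_cancel, exp_zero]
  rw [Pi.div_apply, tanh_eq, div_eq_div_iff (by positivity) (by positivity),
    show -(2 * x) = -x + -x by ring, exp_add]
  linear_combination (-2 * exp (-x)) * hinv

lemma integrableOn_and_integral_Ioi_one_sub_tanh_div_sq {μ : ℝ} (hμ : 0 < μ) :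
    IntegrableOn (fun s => 1 - tanh (s / μ) ^ 2) (Ioi 0) ∧
      ∫ s in Ioi 0, (1 - tanh (s / μ) ^ 2) = μ := by
  have hderiv (s : ℝ) : HasDerivAt (fun s => μ * tanh (s / μ)) (1 - tanh (s / μ) ^ 2) s := by
    refine (((hasDerivAt_tanh_s17 _).comp s ((hasDerivAt_id s).div_const μ)).const_mul μ).congr_deriv
      ?_
    simp only [id]
    field_simp
  have hnonneg (s : ℝ) : 0 ≤ 1 - tanh (s / μ) ^ 2 := sub_nonneg.mpr (tanh_sq_lt_one _).le
  have hlim : Tendsto (fun s => μ * tanh (s / μ)) atTop (𝓝 μ) := by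
    simpa using (tendsto_tanh_atTop.comp (tendsto_id.atTop_div_const hμ)).const_mul μ
  refine ⟨integrableOn_Ioi_deriv_of_nonneg' (fun s _ => hderiv s) (fun s _ => hnonneg s) hlim, ?_⟩
  simpa using integral_Ioi_of_hasDerivAt_of_nonneg' (a := 0) (fun s _ => hderiv s)
    (fun s _ => hnonneg s) hlim

lemma gaussianPDFReal_le (m : ℝ) (v : ℝ≥0) (x : ℝ) :
    gaussianPDFReal m v x ≤ (√(2 * π * v))⁻¹ := by
  refine mul_le_of_le_one_right (by positivity) (exp_le_one_iff.mpr ?_)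
  exact div_nonpos_of_nonpos_of_nonneg (neg_nonpos.mpr (sq_nonneg _)) (by positivity)

lemma integral_gaussianReal_le_of_nonneg {m : ℝ} {v : ℝ≥0} (hv : v ≠ 0) {f : ℝ → ℝ}
    (hf : 0 ≤ f) (hfi : Integrable f) :
    ∫ x, f x ∂gaussianReal m v ≤ (√(2 * π * v))⁻¹ * ∫ x, f x := by
  rw [integral_gaussianReal_eq_integral_smul hv, ← integral_const_mul]
  refine integral_mono ?_ (hfi.const_mul _)
    fun x => mul_le_mul_of_nonneg_right (gaussianPDFReal_le m v x) (hf x)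
  refine hfi.bdd_mul (c := (√(2 * π * v))⁻¹) (measurable_gaussianPDFReal m v).aestronglyMeasurable
    (ae_of_all _ fun x => ?_)
  rw [Real.norm_of_nonneg (gaussianPDFReal_nonneg m v x)]
  exact gaussianPDFReal_le m v x

lemma integral_mul_sub_gaussianReal (m : ℝ) (v : ℝ≥0) (s : ℝ) :
    ∫ x, x * (s - x) ∂gaussianReal m v = m * (s - m) - v := by
  have h2 : MemLp id 2 (gaussianReal m v) := memLp_id_gaussianReal 2
  have hsq : ∫ x, x ^ 2 ∂gaussianReal m v = v + m ^ 2 := by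
    have := variance_eq_sub h2
    simp only [variance_id_gaussianReal, Pi.pow_apply, id, integral_id_gaussianReal] at this
    linarith
  have hi1 : Integrable (fun x => s * x) (gaussianReal m v) :=
    (h2.integrable one_le_two).const_mul s
  have hi2 : Integrable (fun x => x ^ 2) (gaussianReal m v) := h2.integrable_sq
  simp_rw [mul_sub, ← sq, mul_comm _ s]
  rw [integral_sub hi1 hi2, hsq, integral_const_mul, integral_id_gaussianReal]
  ring

-- Completing the square in `x`.
lemma gaussianPDFReal_mul_gaussianPDFReal_sub {A B : ℝ≥0} (hA : A ≠ 0) (hB : B ≠ 0) (x s : ℝ) :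
    gaussianPDFReal 0 A x * gaussianPDFReal 0 B (s - x) =
      gaussianPDFReal 0 (A + B) s * gaussianPDFReal (A / (A + B) * s) (A * B / (A + B)) x := by
  have hA' : (0 : ℝ) < A := by positivity
  have hB' : (0 : ℝ) < B := by positivity
  simp only [gaussianPDFReal, NNReal.coe_add, NNReal.coe_div, NNReal.coe_mul, sub_zero]
  rw [mul_mul_mul_comm, ← exp_add, mul_mul_mul_comm, ← exp_add, ← mul_inv, ← mul_inv,
    ← sqrt_mul (by positivity), ← sqrt_mul (by positivity)]
  congr 2
  · field_simp
  · field_simp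
    ring

/-- Disintegration of `N(0, A) ⊗ N(0, B)` along `s = x + y`: the sum has law `N(0, A + B)`, and
given the sum `s` the first coordinate has law `N(A s / (A + B), A B / (A + B))`. -/
theorem integral_prod_gaussianReal_eq_integral_sum {A B : ℝ≥0} (hA : A ≠ 0) (hB : B ≠ 0)
    {F : ℝ × ℝ → ℝ} (hF : Integrable F ((gaussianReal 0 A).prod (gaussianReal 0 B))) :
    ∫ z, F z ∂(gaussianReal 0 A).prod (gaussianReal 0 B) =
      ∫ s, ∫ x, F (x, s - x) ∂gaussianReal (A / (A + B) * s) (A * B / (A + B))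
        ∂gaussianReal 0 (A + B) := by
  set ρ : ℝ × ℝ → ℝ≥0∞ := fun z => gaussianPDF 0 A z.1 * gaussianPDF 0 B z.2
  have hρ : Measurable ρ := by fun_prop
  have hρ_lt_top : ∀ᵐ z ∂(volume.prod volume), ρ z < ∞ :=
    ae_of_all _ fun z => ENNReal.mul_lt_top gaussianPDF_lt_top gaussianPDF_lt_top
  have hρ_toReal (z : ℝ × ℝ) :
      (ρ z).toReal = gaussianPDFReal 0 A z.1 * gaussianPDFReal 0 B z.2 := by
    simp [ρ, ENNReal.toReal_mul, toReal_gaussianPDF]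
  have hprod : (gaussianReal 0 A).prod (gaussianReal 0 B) = (volume.prod volume).withDensity ρ := by
    rw [gaussianReal_of_var_ne_zero _ hA, gaussianReal_of_var_ne_zero _ hB,
      prod_withDensity (measurable_gaussianPDF _ _) (measurable_gaussianPDF _ _)]
  set G : ℝ × ℝ → ℝ := fun z => gaussianPDFReal 0 A z.1 * gaussianPDFReal 0 B z.2 * F z
  have hG : Integrable G (volume.prod volume) := by
    rw [hprod, integrable_withDensity_iff_integrable_smul' hρ hρ_lt_top] at hF
    simpa only [hρ_toReal, smul_eq_mul] using hF
  have hshear := measurePreserving_prod_sub (volume : Measure ℝ) (volume : Measure ℝ)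
  have hshear_emb := (MeasurableEquiv.shearSubRight ℝ).measurableEmbedding
  have hAB : A + B ≠ 0 := by positivity
  have hT : A * B / (A + B) ≠ 0 := by positivity
  calc ∫ z, F z ∂(gaussianReal 0 A).prod (gaussianReal 0 B)
      = ∫ z, G z ∂(volume.prod volume) := by
        rw [hprod, integral_withDensity_eq_integral_toReal_smul hρ hρ_lt_top]
        simp only [hρ_toReal, smul_eq_mul, G]
    _ = ∫ z, G (z.1, z.2 - z.1) ∂(volume.prod volume) :=
        (hshear.integral_comp hshear_emb G).symm
    _ = ∫ s, ∫ x, G (x, s - x) :=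
        integral_prod_symm _ ((hshear.integrable_comp_emb hshear_emb).mpr hG)
    _ = ∫ s, gaussianPDFReal 0 (A + B) s *
          ∫ x, gaussianPDFReal (A / (A + B) * s) (A * B / (A + B)) x * F (x, s - x) := by
        congr 1 with s
        rw [← integral_const_mul]
        congr 1 with x
        rw [← mul_assoc, ← gaussianPDFReal_mul_gaussianPDFReal_sub hA hB]
    _ = _ := by
        simp only [integral_gaussianReal_eq_integral_smul hAB,
          integral_gaussianReal_eq_integral_smul hT, smul_eq_mul]

theorem neg_mul_integral_le_integral_mul_mul_gaussianReal_prod {A B : ℝ≥0} (hA : A ≠ 0)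
    (hB : B ≠ 0) {w : ℝ → ℝ} {C : ℝ} (hw : Measurable w) (hw_nonneg : 0 ≤ w)
    (hw_le : ∀ s, w s ≤ C) :
    -(A * B / (A + B) : ℝ) * ∫ s, w s ∂gaussianReal 0 (A + B) ≤
      ∫ v, w (v.1 + v.2) * (v.1 * v.2) ∂(gaussianReal 0 A).prod (gaussianReal 0 B) := by
  have hw_norm (s : ℝ) : ‖w s‖ ≤ C := by rw [Real.norm_of_nonneg (hw_nonneg s)]; exact hw_le s
  have hF : Integrable (fun v : ℝ × ℝ => w (v.1 + v.2) * (v.1 * v.2))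
      ((gaussianReal 0 A).prod (gaussianReal 0 B)) := by
    have h1 : Integrable (fun x : ℝ => x) (gaussianReal 0 A) :=
      (memLp_id_gaussianReal 1).integrable le_rfl
    have h2 : Integrable (fun x : ℝ => x) (gaussianReal 0 B) :=
      (memLp_id_gaussianReal 1).integrable le_rfl
    exact (h1.mul_prod h2).bdd_mul (hw.comp measurable_add).aestronglyMeasurable
      (ae_of_all _ fun v => hw_norm _)
  have hS : (0 : ℝ) < A + B := by positivity
  have hfiber (s : ℝ) :
      ∫ x, x * (s - x) ∂gaussianReal (A / (A + B) * s) (A * B / (A + B)) =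
        A * B / (A + B) ^ 2 * s ^ 2 - A * B / (A + B) := by
    rw [integral_mul_sub_gaussianReal, NNReal.coe_div, NNReal.coe_mul, NNReal.coe_add]
    field_simp
    ring
  have hquad : Integrable (fun s : ℝ => A * B / (A + B) ^ 2 * s ^ 2 - A * B / (A + B))
      (gaussianReal 0 (A + B)) :=
    ((memLp_id_gaussianReal 2).integrable_sq.const_mul _).sub (integrable_const _)
  have hw_int : Integrable w (gaussianReal 0 (A + B)) :=
    .of_bound hw.aestronglyMeasurable C (ae_of_all _ hw_norm)
  rw [integral_prod_gaussianReal_eq_integral_sum hA hB hF]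
  simp only [add_sub_cancel, integral_const_mul, hfiber]
  rw [← integral_const_mul]
  refine integral_mono (hw_int.const_mul _) (hquad.bdd_mul hw.aestronglyMeasurable
    (ae_of_all _ hw_norm)) fun s => ?_
  have : 0 ≤ A * B / (A + B) ^ 2 * s ^ 2 := by positivity
  linarith [mul_nonneg (hw_nonneg s) this]

theorem neg_le_integral_sech_sq_mul_gaussianReal_prod {A B : ℝ≥0} (hA : A ≠ 0) (hB : B ≠ 0)
    {μ : ℝ} (hμ : 0 < μ) :
    -(A * B / (A + B) * μ * (√(2 * π * (A + B)))⁻¹ : ℝ) ≤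
      ∫ v, (if 0 < v.1 + v.2 then (1 - tanh ((v.1 + v.2) / μ) ^ 2) * (v.1 * v.2) else 0)
        ∂(gaussianReal 0 A).prod (gaussianReal 0 B) := by
  set w : ℝ → ℝ := (Ioi 0).indicator fun s => 1 - tanh (s / μ) ^ 2
  have hw_nonneg : 0 ≤ w := indicator_nonneg fun s _ => sub_nonneg.mpr (tanh_sq_lt_one _).le
  have hw_le (s : ℝ) : w s ≤ 1 :=
    indicator_le' (fun s _ => sub_le_self _ (sq_nonneg _)) (fun _ _ => zero_le_one) s
  have hw : Measurable w := Measurable.indicator (by fun_prop) measurableSet_Ioi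
  obtain ⟨hw_int, hw_integral⟩ := integrableOn_and_integral_Ioi_one_sub_tanh_div_sq hμ
  have hAB : A + B ≠ 0 := by positivity
  have hF : (fun v : ℝ × ℝ =>
        if 0 < v.1 + v.2 then (1 - tanh ((v.1 + v.2) / μ) ^ 2) * (v.1 * v.2) else 0) =
      fun v => w (v.1 + v.2) * (v.1 * v.2) := by
    ext v
    simp only [w, indicator_apply, mem_Ioi, ite_mul, zero_mul]
  rw [hF]
  refine le_trans ?_
    (neg_mul_integral_le_integral_mul_mul_gaussianReal_prod hA hB hw hw_nonneg hw_le)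
  calc -(A * B / (A + B) * μ * (√(2 * π * (A + B)))⁻¹ : ℝ)
      = -(A * B / (A + B) : ℝ) * ((√(2 * π * (A + B)))⁻¹ * ∫ s, w s) := by
        rw [integral_indicator measurableSet_Ioi, hw_integral]
        ring
    _ ≤ -(A * B / (A + B) : ℝ) * ∫ s, w s ∂gaussianReal 0 (A + B) := by
        refine mul_le_mul_of_nonpos_left (integral_gaussianReal_le_of_nonneg hAB hw_nonneg
          ((integrable_indicator_iff measurableSet_Ioi).mpr hw_int)) ?_
        simp only [neg_nonpos]
        positivity

end

/-- Lemma: Gaussian expectation lower bound for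
`(1 - tanh²((X+Y)/μ)) XY 1{X+Y>0}`. -/
theorem statement17 (σX σY μ : ℝ) (hX : 0 < σX) (hY : 0 < σY) (hμ : 0 < μ) :
    -(1 / Real.sqrt (2 * π)) * (μ * σX ^ 2 * σY ^ 2 / (σX ^ 2 + σY ^ 2) ^ ((3 : ℝ) / 2)) -
      3 / Real.sqrt (2 * π) * (σX ^ 2 * σY ^ 2 * μ ^ 3 / (σX ^ 2 + σY ^ 2) ^ ((5 : ℝ) / 2)) ≤
    ∫ v : ℝ × ℝ,
      (if 0 < v.1 + v.2 then (1 - Real.tanh ((v.1 + v.2) / μ) ^ 2) * (v.1 * v.2) else 0)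
      ∂((gaussianReal 0 ⟨σX ^ 2, sq_nonneg σX⟩).prod
          (gaussianReal 0 ⟨σY ^ 2, sq_nonneg σY⟩)) := by
  have hA : (⟨σX ^ 2, sq_nonneg σX⟩ : ℝ≥0) ≠ 0 := ne_of_gt (show (0 : ℝ) < σX ^ 2 by positivity)
  have hB : (⟨σY ^ 2, sq_nonneg σY⟩ : ℝ≥0) ≠ 0 := ne_of_gt (show (0 : ℝ) < σY ^ 2 by positivity)
  refine le_trans ?_ (neg_le_integral_sech_sq_mul_gaussianReal_prod hA hB hμ)
  have hS : 0 < σX ^ 2 + σY ^ 2 := by positivity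
  have h32 : (σX ^ 2 + σY ^ 2) ^ ((3 : ℝ) / 2) = (σX ^ 2 + σY ^ 2) * √(σX ^ 2 + σY ^ 2) := by
    rw [show (3 : ℝ) / 2 = 1 + 1 / 2 by norm_num, rpow_add hS, rpow_one, ← sqrt_eq_rpow]
  have hfirst : -(1 / √(2 * π)) * (μ * σX ^ 2 * σY ^ 2 / (σX ^ 2 + σY ^ 2) ^ ((3 : ℝ) / 2)) =
      -(σX ^ 2 * σY ^ 2 / (σX ^ 2 + σY ^ 2) * μ * (√(2 * π * (σX ^ 2 + σY ^ 2)))⁻¹) := by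
    rw [h32, sqrt_mul (by positivity : (0 : ℝ) ≤ 2 * π)]
    field_simp
  have hsecond :
      0 ≤ 3 / √(2 * π) * (σX ^ 2 * σY ^ 2 * μ ^ 3 / (σX ^ 2 + σY ^ 2) ^ ((5 : ℝ) / 2)) := by
    positivity
  -- The last step is `rfl`: the coercion of `⟨σX ^ 2, _⟩ : ℝ≥0` to `ℝ` is `σX ^ 2` by definition.
  calc _ ≤ -(σX ^ 2 * σY ^ 2 / (σX ^ 2 + σY ^ 2) * μ * (√(2 * π * (σX ^ 2 + σY ^ 2)))⁻¹) := by
        linarith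
    _ = _ := rfl

end
end
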